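/- arXiv:1905.13558 — 3 statements merged into one kernel-verified Lean document; each statement's English description precedes it below -/
import Mathlib

section
/- For every positive integer n, the number of subgroups of index n in π₁(G₃) that are isomorphic to ℤ³ equals ω(n/3), which is 0 when 3 does not divide n. -/
open scoped Classical

noncomputable section

/-- `θ(n)`: number of pairs `(p,q)` with `p > 0`, `q ≥ 0`, `p² − pq + q² = n`. -/
def theta (n : ℕ) : ℕ :=
  Nat.card {pq : ℤ × ℤ // 0 < pq.1 ∧ 0 ≤ pq.2 ∧ pq.1 ^ 2 - pq.1 * pq.2 + pq.2 ^ 2 = (n : ℤ)}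

/-- `σ₁(n)`: sum of positive divisors of `n`. -/
def sigma1 (n : ℕ) : ℕ := ∑ d ∈ n.divisors, d

/-- `σ₂(n) = Σ_{k ∣ n} σ₁(k)`. -/
def sigma2 (n : ℕ) : ℕ := ∑ k ∈ n.divisors, sigma1 k

/-- `ω(n) = Σ_{k ∣ n} k·σ₁(k)`. -/
def omegaFn (n : ℕ) : ℕ := ∑ k ∈ n.divisors, k * sigma1 k

/-- The order-3 automorphism `ℓ : (x,y) ↦ (−y, x−y)` of `ℤ²`. -/
def ellG3 : (ℤ × ℤ) ≃+ (ℤ × ℤ) where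
  toFun p := (-p.2, p.1 - p.2)
  invFun p := (p.2 - p.1, -p.1)
  left_inv p := by simp [Prod.ext_iff]
  right_inv p := by simp [Prod.ext_iff]
  map_add' p q := by simp [Prod.ext_iff]; constructor <;> ring

/-- The order-6 automorphism `(x,y) ↦ (x−y, x)` of `ℤ²`. -/
def ellG5 : (ℤ × ℤ) ≃+ (ℤ × ℤ) where
  toFun p := (p.1 - p.2, p.1)
  invFun p := (p.2, p.2 - p.1)
  left_inv p := by simp [Prod.ext_iff]
  right_inv p := by simp [Prod.ext_iff]
  map_add' p q := by simp [Prod.ext_iff]; ring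

/-- The order-2 automorphism `(x,y) ↦ (−x, −y)` of `ℤ²`. -/
def ellG2 : (ℤ × ℤ) ≃+ (ℤ × ℤ) where
  toFun p := (-p.1, -p.2)
  invFun p := (-p.1, -p.2)
  left_inv p := by simp [Prod.ext_iff]
  right_inv p := by simp [Prod.ext_iff]
  map_add' p q := by simp [Prod.ext_iff]; constructor <;> ring

/-- The action of `ℤ` on `ℤ²` generated by `ℓ = ellG3`. -/
def phiG3 : Multiplicative ℤ →* MulAut (Multiplicative (ℤ × ℤ)) :=
  zpowersHom _ (AddEquiv.toMultiplicative ellG3)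

def phiG5 : Multiplicative ℤ →* MulAut (Multiplicative (ℤ × ℤ)) :=
  zpowersHom _ (AddEquiv.toMultiplicative ellG5)

def phiG2 : Multiplicative ℤ →* MulAut (Multiplicative (ℤ × ℤ)) :=
  zpowersHom _ (AddEquiv.toMultiplicative ellG2)

/-- `π₁(G₃) = ℤ² ⋊ ℤ`, the generator of `ℤ` acting by `ℓ : (x,y) ↦ (−y, x−y)`. -/
abbrev PiG3 : Type := Multiplicative (ℤ × ℤ) ⋊[phiG3] Multiplicative ℤ

/-- `π₁(G₅) = ℤ² ⋊ ℤ`, the generator of `ℤ` acting by `(x,y) ↦ (x−y, x)`. -/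
abbrev PiG5 : Type := Multiplicative (ℤ × ℤ) ⋊[phiG5] Multiplicative ℤ

/-- `π₁(G₂) = ℤ² ⋊ ℤ`, the generator of `ℤ` acting by `(x,y) ↦ (−x, −y)`. -/
abbrev PiG2 : Type := Multiplicative (ℤ × ℤ) ⋊[phiG2] Multiplicative ℤ

/-- `ℤ³`, written multiplicatively. -/
abbrev Z3 : Type := Multiplicative (ℤ × ℤ × ℤ)

/-- The number of conjugacy classes of subgroups of `G` satisfying a property `P`
(invariant under conjugation). -/
def numConjClasses (G : Type*) [Group G] (P : Subgroup G → Prop) : ℕ :=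
  Nat.card (Quot (fun H K : {H : Subgroup G // P H} =>
    ∃ g : G, Subgroup.map (MulAut.conj g).toMonoidHom H.val = K.val))

/-!
A subgroup `H ≅ ℤ³` of finite index in `π₁(G₃) = ℤ² ⋊ ℤ` is abelian and contains a nonzero
translation `t ∈ ℤ²`. Since neither `ℓ` nor `ℓ²` fixes a nonzero vector, an element of `H` can only
commute with `t` if its `ℤ`-component is divisible by `3`. So `H` lies in the translation subgroup
`ℤ² ⋊ 3ℤ ≅ ℤ³`, of index `3`; conversely every finite-index subgroup of `ℤ³` is isomorphic to `ℤ³`.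
Hence the count is the number of subgroups of index `N = n / 3` in `ℤ³`. These are classified by
their Hermite normal forms: lower triangular bases with diagonal `m, a, d`, `m * a * d = N`, and
off-diagonal entries reduced modulo the diagonal entry of their row. There are
`∑_{m a d = N} a d² = ∑_{k ∣ N} k σ₁(k) = ω(N)` of them.
-/

theorem LinearMap.index_range_eq_natAbs_det {M : Type*} [AddCommGroup M] [Module.Free ℤ M]
    [Module.Finite ℤ M] (f : M →ₗ[ℤ] M) (hf : Function.Injective f) :
    (LinearMap.range f).toAddSubgroup.index = (LinearMap.det f).natAbs :=
  (Submodule.natAbs_det_equiv _ (LinearEquiv.ofInjective f hf)).symm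

lemma Int.exists_nat_mem_iff_dvd (S : AddSubgroup ℤ) : ∃ g : ℕ, ∀ x, x ∈ S ↔ (g : ℤ) ∣ x := by
  obtain ⟨a, rfl⟩ := Int.subgroup_cyclic S
  refine ⟨a.natAbs, fun x => ?_⟩
  rw [← AddSubgroup.zmultiples_eq_closure, ← Int.zmultiples_natAbs, Int.mem_zmultiples_iff]

section HermiteNormalForm

def hermiteMatrix (m a d b v₁ v₂ : ℕ) : Matrix (Fin 3) (Fin 3) ℤ :=
  !![(m : ℤ), 0, 0; (v₁ : ℤ), a, 0; (v₂ : ℤ), b, d]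

def hermiteLattice (m a d b v₁ v₂ : ℕ) : AddSubgroup (Fin 3 → ℤ) :=
  (LinearMap.range (hermiteMatrix m a d b v₁ v₂).toLin').toAddSubgroup

def HasPivots (K : AddSubgroup (Fin 3 → ℤ)) (m a d : ℕ) : Prop :=
  ∀ v ∈ K, (m : ℤ) ∣ v 0 ∧ (v 0 = 0 → (a : ℤ) ∣ v 1) ∧ (v 0 = 0 → v 1 = 0 → (d : ℤ) ∣ v 2)

variable {m a d b v₁ v₂ : ℕ}

lemma mem_hermiteLattice {v : Fin 3 → ℤ} : v ∈ hermiteLattice m a d b v₁ v₂ ↔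
    ∃ q s u : ℤ, v 0 = q * m ∧ v 1 = q * v₁ + s * a ∧ v 2 = q * v₂ + s * b + u * d := by
  simp only [hermiteLattice, Submodule.mem_toAddSubgroup, LinearMap.mem_range,
    Matrix.toLin'_apply, funext_iff, Fin.forall_fin_succ, IsEmpty.forall_iff, hermiteMatrix]
  constructor
  · rintro ⟨w, h⟩
    refine ⟨w 0, w 1, w 2, ?_⟩
    simp [Matrix.mulVec, dotProduct, Fin.sum_univ_three] at h
    grind
  · rintro ⟨q, s, u, h⟩
    refine ⟨![q, s, u], ?_⟩
    simp [Matrix.mulVec, dotProduct, Fin.sum_univ_three]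
    grind

lemma columns_mem_hermiteLattice :
    ![(m : ℤ), v₁, v₂] ∈ hermiteLattice m a d b v₁ v₂ ∧
      ![0, (a : ℤ), b] ∈ hermiteLattice m a d b v₁ v₂ ∧
      ![0, 0, (d : ℤ)] ∈ hermiteLattice m a d b v₁ v₂ :=
  ⟨mem_hermiteLattice.mpr ⟨1, 0, 0, by simp⟩, mem_hermiteLattice.mpr ⟨0, 1, 0, by simp⟩,
    mem_hermiteLattice.mpr ⟨0, 0, 1, by simp⟩⟩

lemma index_hermiteLattice (hm : m ≠ 0) (ha : a ≠ 0) (hd : d ≠ 0) :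
    (hermiteLattice m a d b v₁ v₂).index = m * a * d := by
  have hdet : (hermiteMatrix m a d b v₁ v₂).det = m * a * d := by
    simp [hermiteMatrix, Matrix.det_fin_three]
  rw [hermiteLattice, LinearMap.index_range_eq_natAbs_det, LinearMap.det_toLin', hdet]
  · simp [Int.natAbs_mul]
  · exact Matrix.mulVec_injective_of_det_ne_zero (by rw [hdet]; positivity)

lemma hasPivots_hermiteLattice (hm : m ≠ 0) (ha : a ≠ 0) :
    HasPivots (hermiteLattice m a d b v₁ v₂) m a d := by
  intro v hv
  obtain ⟨q, s, u, h₀, h₁, h₂⟩ := mem_hermiteLattice.mp hv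
  refine ⟨⟨q, by rw [h₀, mul_comm]⟩, fun hv₀ => ?_, fun hv₀ hv₁ => ?_⟩
  · obtain rfl : q = 0 := by simpa [hm, hv₀, eq_comm] using h₀
    exact ⟨s, by rw [h₁]; ring⟩
  · obtain rfl : q = 0 := by simpa [hm, hv₀, eq_comm] using h₀
    obtain rfl : s = 0 := by simpa [ha, hv₁, eq_comm] using h₁
    exact ⟨u, by rw [h₂]; ring⟩

lemma hermiteLattice_le {K : AddSubgroup (Fin 3 → ℤ)} (h₀ : ![(m : ℤ), v₁, v₂] ∈ K)
    (h₁ : ![0, (a : ℤ), b] ∈ K) (h₂ : ![0, 0, (d : ℤ)] ∈ K) :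
    hermiteLattice m a d b v₁ v₂ ≤ K := by
  intro v hv
  obtain ⟨q, s, u, hv₀, hv₁, hv₂⟩ := mem_hermiteLattice.mp hv
  have : v = q • ![(m : ℤ), v₁, v₂] + s • ![0, (a : ℤ), b] + u • ![0, 0, (d : ℤ)] := by
    ext i; fin_cases i <;> simp [hv₀, hv₁, hv₂]
  rw [this]
  exact add_mem (add_mem (zsmul_mem h₀ q) (zsmul_mem h₁ s)) (zsmul_mem h₂ u)

lemma eq_hermiteLattice_of_hasPivots {K : AddSubgroup (Fin 3 → ℤ)}
    (h₀ : ![(m : ℤ), v₁, v₂] ∈ K) (h₁ : ![0, (a : ℤ), b] ∈ K) (h₂ : ![0, 0, (d : ℤ)] ∈ K)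
    (hK : HasPivots K m a d) : K = hermiteLattice m a d b v₁ v₂ := by
  refine le_antisymm (fun v hv => ?_) (hermiteLattice_le h₀ h₁ h₂)
  obtain ⟨q, hq⟩ := (hK v hv).1
  have hv' := sub_mem hv (zsmul_mem h₀ q)
  -- `Matrix.sub_cons` would turn the coordinates `v i` into `vecHead`/`vecTail` terms
  obtain ⟨s, hs⟩ := (hK _ hv').2.1 (by simp [hq, mul_comm, -Matrix.sub_cons])
  have hv'' := sub_mem hv' (zsmul_mem h₁ s)
  obtain ⟨u, hu⟩ := (hK _ hv'').2.2 (by simp [hq, mul_comm, -Matrix.sub_cons])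
    (by simp [-Matrix.sub_cons] at hs ⊢; linarith)
  simp [-Matrix.sub_cons] at hs hu
  exact mem_hermiteLattice.mpr ⟨q, s, u, by linarith, by linarith, by linarith⟩

lemma hermiteLattice_inj {m' a' d' b' v₁' v₂' : ℕ} (hm : m ≠ 0) (ha : a ≠ 0) (hb : b < d)
    (hv₁ : v₁ < a) (hv₂ : v₂ < d) (hm' : m' ≠ 0) (ha' : a' ≠ 0) (hb' : b' < d')
    (hv₁' : v₁' < a') (hv₂' : v₂' < d')
    (h : hermiteLattice m a d b v₁ v₂ = hermiteLattice m' a' d' b' v₁' v₂') :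
    m = m' ∧ a = a' ∧ d = d' ∧ b = b' ∧ v₁ = v₁' ∧ v₂ = v₂' := by
  have P := hasPivots_hermiteLattice (d := d) (b := b) (v₁ := v₁) (v₂ := v₂) hm ha
  have P' := hasPivots_hermiteLattice (d := d') (b := b') (v₁ := v₁') (v₂ := v₂') hm' ha'
  obtain ⟨c₀, c₁, c₂⟩ := columns_mem_hermiteLattice (m := m) (a := a) (d := d) (b := b)
    (v₁ := v₁) (v₂ := v₂)
  obtain ⟨c₀', c₁', c₂'⟩ := columns_mem_hermiteLattice (m := m') (a := a') (d := d') (b := b')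
    (v₁ := v₁') (v₂ := v₂')
  rw [← h] at c₀' c₁' c₂' P'
  obtain rfl : m = m' := Nat.dvd_antisymm (Int.natCast_dvd_natCast.mp (P _ c₀').1)
    (Int.natCast_dvd_natCast.mp (P' _ c₀).1)
  obtain rfl : a = a' := Nat.dvd_antisymm (Int.natCast_dvd_natCast.mp ((P _ c₁').2.1 rfl))
    (Int.natCast_dvd_natCast.mp ((P' _ c₁).2.1 rfl))
  obtain rfl : d = d' := Nat.dvd_antisymm (Int.natCast_dvd_natCast.mp ((P _ c₂').2.2 rfl rfl))
    (Int.natCast_dvd_natCast.mp ((P' _ c₂).2.2 rfl rfl))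
  have hdb := (P _ (sub_mem c₁' c₁)).2.2 (by simp) (by simp)
  have hdv₁ := (P _ (sub_mem c₀' c₀)).2.1 (by simp)
  have hdv₂ := (P _ (sub_mem c₀' c₀)).2.2 (by simp)
  simp [-Matrix.sub_cons] at hdb hdv₁ hdv₂
  obtain rfl : b = b' := (Nat.modEq_iff_dvd.mpr hdb).eq_of_lt_of_lt hb hb'
  obtain rfl : v₁ = v₁' := (Nat.modEq_iff_dvd.mpr hdv₁).eq_of_lt_of_lt hv₁ hv₁'
  obtain rfl : v₂ = v₂' := (Nat.modEq_iff_dvd.mpr (hdv₂ (sub_self _))).eq_of_lt_of_lt hv₂ hv₂'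
  exact ⟨rfl, rfl, rfl, rfl, rfl, rfl⟩

end HermiteNormalForm

lemma exists_hasPivots {K : AddSubgroup (Fin 3 → ℤ)} (hK : K.index ≠ 0) :
    ∃ m a d : ℕ, m ≠ 0 ∧ a ≠ 0 ∧ d ≠ 0 ∧ HasPivots K m a d ∧ (∃ g ∈ K, g 0 = m) ∧
      (∃ g ∈ K, g 0 = 0 ∧ g 1 = a) ∧ ![0, 0, (d : ℤ)] ∈ K := by
  let π (i : Fin 3) : (Fin 3 → ℤ) →+ ℤ := Pi.evalAddMonoidHom (fun _ => ℤ) i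
  obtain ⟨m, hm⟩ := Int.exists_nat_mem_iff_dvd (K.map (π 0))
  obtain ⟨a, ha⟩ := Int.exists_nat_mem_iff_dvd ((K ⊓ (π 0).ker).map (π 1))
  obtain ⟨d, hd⟩ := Int.exists_nat_mem_iff_dvd ((K ⊓ (π 0).ker ⊓ (π 1).ker).map (π 2))
  simp only [AddSubgroup.mem_map, AddSubgroup.mem_inf, AddMonoidHom.mem_ker, π,
    Pi.evalAddMonoidHom_apply] at hm ha hd
  have ne_zero_of_dvd {g : ℕ} (i : Fin 3)
      (h : ∀ n : ℕ, (n • Pi.single i 1 : Fin 3 → ℤ) ∈ K → (g : ℤ) ∣ n) : g ≠ 0 := by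
    obtain ⟨n, hn, -, hnK⟩ := AddSubgroup.exists_nsmul_mem_of_index_ne_zero hK (Pi.single i 1)
    exact (Nat.pos_of_dvd_of_pos (Int.natCast_dvd_natCast.mp (h n hnK)) hn).ne'
  refine ⟨m, a, d, ne_zero_of_dvd 0 fun n hn => (hm n).mp ⟨_, hn, by simp⟩,
    ne_zero_of_dvd 1 fun n hn => (ha n).mp ⟨_, ⟨hn, by simp⟩, by simp⟩,
    ne_zero_of_dvd 2 fun n hn => (hd n).mp ⟨_, ⟨⟨hn, by simp⟩, by simp⟩, by simp⟩,
    fun v hv => ⟨(hm _).mp ⟨v, hv, rfl⟩, fun h₀ => (ha _).mp ⟨v, ⟨hv, h₀⟩, rfl⟩,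
      fun h₀ h₁ => (hd _).mp ⟨v, ⟨⟨hv, h₀⟩, h₁⟩, rfl⟩⟩, (hm m).mpr dvd_rfl, ?_, ?_⟩
  · obtain ⟨g, ⟨hg, h₀⟩, h₁⟩ := (ha a).mpr dvd_rfl
    exact ⟨g, hg, h₀, h₁⟩
  · obtain ⟨g, ⟨⟨hg, h₀⟩, h₁⟩, h₂⟩ := (hd d).mpr dvd_rfl
    convert hg using 1
    ext i; fin_cases i <;> simp [h₀, h₁, h₂]

lemma exists_eq_hermiteLattice {K : AddSubgroup (Fin 3 → ℤ)} (hK : K.index ≠ 0) :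
    ∃ m a d b v₁ v₂ : ℕ, m ≠ 0 ∧ a ≠ 0 ∧ b < d ∧ v₁ < a ∧ v₂ < d ∧
      K = hermiteLattice m a d b v₁ v₂ := by
  obtain ⟨m, a, d, hm, ha, hd, hK, ⟨g₀, hg₀, hg₀0⟩, ⟨g₁, hg₁, hg₁0, hg₁1⟩, c₂⟩ :=
    exists_hasPivots hK
  obtain ⟨b, hb⟩ := Int.eq_ofNat_of_zero_le (Int.emod_nonneg (g₁ 2) (b := d) (by omega))
  have c₁ : ![0, (a : ℤ), b] ∈ K := by
    convert sub_mem hg₁ (zsmul_mem c₂ (g₁ 2 / d)) using 1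
    ext i; fin_cases i <;> simp [hg₁0, hg₁1, ← hb, Int.emod_def, mul_comm, -Matrix.sub_cons]
  have hw := sub_mem hg₀ (zsmul_mem c₁ (g₀ 1 / a))
  set w := g₀ - (g₀ 1 / a) • ![0, (a : ℤ), b]
  obtain ⟨v₁, hv₁⟩ := Int.eq_ofNat_of_zero_le (Int.emod_nonneg (g₀ 1) (b := a) (by omega))
  obtain ⟨v₂, hv₂⟩ := Int.eq_ofNat_of_zero_le (Int.emod_nonneg (w 2) (b := d) (by omega))
  have c₀ : ![(m : ℤ), v₁, v₂] ∈ K := by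
    convert sub_mem hw (zsmul_mem c₂ (w 2 / d)) using 1
    ext i; fin_cases i <;> simp [w, hg₀0, ← hv₁, ← hv₂, Int.emod_def, mul_comm, -Matrix.sub_cons]
  refine ⟨m, a, d, b, v₁, v₂, hm, ha, ?_, ?_, ?_, eq_hermiteLattice_of_hasPivots c₀ c₁ c₂ hK⟩
  · have := Int.emod_lt_of_pos (g₁ 2) (b := d) (by omega); omega
  · have := Int.emod_lt_of_pos (g₀ 1) (b := a) (by omega); omega
  · have := Int.emod_lt_of_pos (w 2) (b := d) (by omega); omega

/-- `⟨⟨(m, k), _⟩, ⟨(a, d), _⟩, b, v₁, v₂⟩` encodes the Hermite normal form with diagonal `m, a, d`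
(so `m * k = N`, `a * d = k`) and off-diagonal entries `v₁ < a` and `b, v₂ < d`. -/
abbrev HermiteData (N : ℕ) : Type :=
  Σ mk : N.divisorsAntidiagonal, Σ ad : mk.1.2.divisorsAntidiagonal,
    Fin ad.1.2 × Fin ad.1.1 × Fin ad.1.2

lemma card_hermiteData (N : ℕ) : Nat.card (HermiteData N) = omegaFn N := by
  have inner (k : ℕ) : ∑ ad ∈ k.divisorsAntidiagonal, ad.2 * (ad.1 * ad.2) = k * sigma1 k := by
    rw [sigma1, Finset.mul_sum, ← Nat.sum_divisorsAntidiagonal' (fun _ d => k * d)]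
    refine Finset.sum_congr rfl fun ad had => ?_
    rw [← (Nat.mem_divisorsAntidiagonal.mp had).1]
    ring
  rw [HermiteData, Nat.card_sigma]
  simp only [Nat.card_eq_fintype_card, Fintype.card_sigma, Fintype.card_prod, Fintype.card_fin]
  rw [Finset.sum_coe_sort N.divisorsAntidiagonal
    (fun mk => ∑ ad : mk.2.divisorsAntidiagonal, ad.1.2 * (ad.1.1 * ad.1.2))]
  simp only [Finset.sum_coe_sort _ (fun ad : ℕ × ℕ => ad.2 * (ad.1 * ad.2)), inner]
  rw [omegaFn, Nat.sum_divisorsAntidiagonal' (fun _ k => k * sigma1 k)]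

def HermiteData.lattice {N : ℕ} : HermiteData N → AddSubgroup (Fin 3 → ℤ)
  | ⟨⟨(m, _), _⟩, ⟨(a, d), _⟩, b, v₁, v₂⟩ => hermiteLattice m a d b v₁ v₂

lemma HermiteData.index_lattice {N : ℕ} (x : HermiteData N) : x.lattice.index = N := by
  obtain ⟨⟨⟨m, k⟩, hmk⟩, ⟨⟨a, d⟩, had⟩, b, v₁, v₂⟩ := x
  obtain ⟨rfl, hN⟩ := Nat.mem_divisorsAntidiagonal.mp hmk
  obtain ⟨rfl, -⟩ := Nat.mem_divisorsAntidiagonal.mp had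
  simp only [mul_ne_zero_iff] at hN
  rw [lattice, index_hermiteLattice hN.1 hN.2.1 hN.2.2, mul_assoc]

lemma HermiteData.lattice_injective {N : ℕ} : Function.Injective (lattice (N := N)) := by
  rintro ⟨⟨⟨m, k⟩, hmk⟩, ⟨⟨a, d⟩, had⟩, b, v₁, v₂⟩
    ⟨⟨⟨m', k'⟩, hmk'⟩, ⟨⟨a', d'⟩, had'⟩, b', v₁', v₂'⟩ h
  obtain rfl := (Nat.mem_divisorsAntidiagonal.mp had).1
  obtain rfl := (Nat.mem_divisorsAntidiagonal.mp had').1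
  obtain ⟨rfl, rfl, rfl, hb, hv₁, hv₂⟩ := hermiteLattice_inj
    (Nat.left_ne_zero_of_mem_divisorsAntidiagonal hmk)
    (Nat.left_ne_zero_of_mem_divisorsAntidiagonal had) b.2 v₁.2 v₂.2
    (Nat.left_ne_zero_of_mem_divisorsAntidiagonal hmk')
    (Nat.left_ne_zero_of_mem_divisorsAntidiagonal had') b'.2 v₁'.2 v₂'.2 h
  obtain rfl := Fin.ext hb
  obtain rfl := Fin.ext hv₁
  obtain rfl := Fin.ext hv₂
  rfl

lemma HermiteData.exists_lattice_eq {N : ℕ} (hN : N ≠ 0) {K : AddSubgroup (Fin 3 → ℤ)}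
    (hK : K.index = N) : ∃ x : HermiteData N, x.lattice = K := by
  obtain ⟨m, a, d, b, v₁, v₂, hm, ha, hb, hv₁, hv₂, rfl⟩ := exists_eq_hermiteLattice (hK ▸ hN)
  rw [index_hermiteLattice hm ha (by omega)] at hK
  refine ⟨⟨⟨(m, a * d), ?_⟩, ⟨(a, d), ?_⟩, ⟨b, hb⟩, ⟨v₁, hv₁⟩, ⟨v₂, hv₂⟩⟩, rfl⟩
  · simp [← hK, mul_assoc]
    omega
  · simp
    omega

theorem card_addSubgroup_index_eq_omegaFn {N : ℕ} (hN : N ≠ 0) :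
    Nat.card {K : AddSubgroup (Fin 3 → ℤ) // K.index = N} = omegaFn N := by
  rw [← card_hermiteData]
  refine (Nat.card_eq_of_bijective (fun x => ⟨x.lattice, x.index_lattice⟩) ⟨?_, ?_⟩).symm
  · exact fun x y h => HermiteData.lattice_injective (congrArg Subtype.val h)
  · rintro ⟨K, hK⟩
    obtain ⟨x, rfl⟩ := HermiteData.exists_lattice_eq hN hK
    exact ⟨x, rfl⟩

lemma phiG3_ofAdd (r : ℤ) : phiG3 (.ofAdd r) = AddEquiv.toMultiplicative ellG3 ^ r := rfl

lemma toMultiplicative_ellG3_pow_three : AddEquiv.toMultiplicative ellG3 ^ 3 = 1 := by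
  ext ⟨x, y⟩ : 1
  change Multiplicative.ofAdd (ellG3 (ellG3 (ellG3 (x, y)))) = .ofAdd (x, y)
  simp [ellG3]
  ring

lemma phiG3_ofAdd_three_mul (k : ℤ) : phiG3 (.ofAdd (3 * k)) = 1 := by
  rw [phiG3_ofAdd, zpow_mul, zpow_ofNat, toMultiplicative_ellG3_pow_three, one_zpow]

lemma three_dvd_of_phiG3_apply_eq {r : ℤ} {v : ℤ × ℤ} (hv : v ≠ 0)
    (h : phiG3 (.ofAdd r) (.ofAdd v) = .ofAdd v) : 3 ∣ r := by
  rw [phiG3_ofAdd, zpow_eq_zpow_emod' r toMultiplicative_ellG3_pow_three, Nat.cast_ofNat] at h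
  obtain ⟨x, y⟩ := v
  have : r % 3 = 0 ∨ r % 3 = 1 ∨ r % 3 = 2 := by omega
  rcases this with h3 | h3 | h3
  · exact Int.dvd_of_emod_eq_zero h3
  all_goals
    rw [h3] at h
    simp [zpow_ofNat, pow_succ, ellG3, Prod.ext_iff] at h
    exact absurd (Prod.mk_eq_zero.mpr (by omega)) hv

def translationHom : Multiplicative (Fin 3 → ℤ) →* PiG3 where
  toFun v := ⟨.ofAdd (v.toAdd 1, v.toAdd 2), .ofAdd (3 * v.toAdd 0)⟩
  map_one' := rfl
  map_mul' v w := by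
    refine SemidirectProduct.ext ?_ ?_
    · rw [SemidirectProduct.mul_left, phiG3_ofAdd_three_mul]
      rfl
    · rw [SemidirectProduct.mul_right, ← ofAdd_add, ← mul_add]
      rfl

@[simp] lemma translationHom_left (v : Multiplicative (Fin 3 → ℤ)) :
    (translationHom v).left = .ofAdd (v.toAdd 1, v.toAdd 2) := rfl

@[simp] lemma translationHom_right (v : Multiplicative (Fin 3 → ℤ)) :
    (translationHom v).right = .ofAdd (3 * v.toAdd 0) := rfl

lemma translationHom_injective : Function.Injective translationHom := by
  intro v w h
  have hl := congrArg SemidirectProduct.left h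
  have hr := congrArg SemidirectProduct.right h
  simp only [translationHom_left, translationHom_right, EmbeddingLike.apply_eq_iff_eq,
    Prod.mk.injEq] at hl hr
  have h0 : v.toAdd 0 = w.toAdd 0 := by omega
  funext i
  fin_cases i
  exacts [h0, hl.1, hl.2]

lemma mem_range_translationHom {g : PiG3} : g ∈ translationHom.range ↔ 3 ∣ g.right.toAdd := by
  constructor
  · rintro ⟨v, rfl⟩
    exact dvd_mul_right 3 _
  · rintro ⟨k, hk⟩
    exact ⟨.ofAdd ![k, g.left.toAdd.1, g.left.toAdd.2], SemidirectProduct.ext rfl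
      (by rw [translationHom_right]; exact congrArg _ hk.symm)⟩

lemma index_range_translationHom : translationHom.range.index = 3 := by
  have : translationHom.range =
      (AddSubgroup.toSubgroup (.zmultiples 3)).comap SemidirectProduct.rightHom := by
    ext g
    rw [mem_range_translationHom, Subgroup.mem_comap, Multiplicative.mem_toSubgroup,
      Int.mem_zmultiples_iff]
    rfl
  rw [this, Subgroup.index_comap_of_surjective _ SemidirectProduct.rightHom_surjective,
    AddSubgroup.index_toSubgroup, Int.index_zmultiples]
  rfl

lemma le_range_translationHom {H : Subgroup PiG3} (hH : H.index ≠ 0)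
    (hcomm : ∀ g ∈ H, ∀ h ∈ H, g * h = h * g) : H ≤ translationHom.range := by
  obtain ⟨n, hn, -, hmem⟩ :=
    Subgroup.exists_pow_mem_of_index_ne_zero hH (SemidirectProduct.inl (.ofAdd (1, 0)))
  have ht : (SemidirectProduct.inl (.ofAdd (1, 0)) : PiG3) ^ n =
      SemidirectProduct.inl (.ofAdd ((n : ℤ), 0)) := by
    rw [← map_pow, ← ofAdd_nsmul]
    simp
  rw [ht] at hmem
  intro g hg
  have hfix := congrArg SemidirectProduct.left (hcomm g hg _ hmem)
  rw [SemidirectProduct.mul_left, SemidirectProduct.mul_left, SemidirectProduct.left_inl,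
    SemidirectProduct.right_inl, map_one, MulAut.one_apply, mul_comm _ g.left,
    mul_left_cancel_iff] at hfix
  exact mem_range_translationHom.mpr (three_dvd_of_phiG3_apply_eq (by simpa using hn.ne') hfix)

def finThreeAddEquivProd : (Fin 3 → ℤ) ≃+ ℤ × ℤ × ℤ where
  toFun v := (v 0, v 1, v 2)
  invFun p := ![p.1, p.2.1, p.2.2]
  left_inv v := by ext i; fin_cases i <;> rfl
  right_inv _ := rfl
  map_add' _ _ := rfl

def latticeSubgroup (K : AddSubgroup (Fin 3 → ℤ)) : Subgroup PiG3 :=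
  K.toSubgroup.map translationHom

lemma latticeSubgroup_injective : Function.Injective latticeSubgroup :=
  (Subgroup.map_injective translationHom_injective).comp AddSubgroup.toSubgroup.injective

lemma index_latticeSubgroup (K : AddSubgroup (Fin 3 → ℤ)) :
    (latticeSubgroup K).index = 3 * K.index := by
  rw [latticeSubgroup, K.toSubgroup.index_map_of_injective translationHom_injective,
    index_range_translationHom, AddSubgroup.index_toSubgroup, mul_comm]

def AddSubgroup.toSubgroupMulEquiv {A : Type*} [AddGroup A] (K : AddSubgroup A) :
    K.toSubgroup ≃* Multiplicative K where
  toFun x := .ofAdd ⟨x.1.toAdd, x.2⟩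
  invFun x := ⟨.ofAdd x.toAdd.1, x.toAdd.2⟩
  map_mul' _ _ := rfl

lemma nonempty_mulEquiv_latticeSubgroup {K : AddSubgroup (Fin 3 → ℤ)} (hK : K.index ≠ 0) :
    Nonempty (latticeSubgroup K ≃* Z3) := by
  obtain ⟨e⟩ := Int.addSubgroup_index_ne_zero_iff.mp hK
  exact ⟨(K.toSubgroup.equivMapOfInjective _ translationHom_injective).symm.trans <|
    K.toSubgroupMulEquiv.trans (AddEquiv.toMultiplicative (e.trans finThreeAddEquivProd))⟩

lemma exists_latticeSubgroup_eq {H : Subgroup PiG3} (hH : H.index ≠ 0) (e : H ≃* Z3) :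
    ∃ K, latticeSubgroup K = H := by
  have hcomm : ∀ g ∈ H, ∀ h ∈ H, g * h = h * g := fun g hg h hh =>
    congrArg Subtype.val (e.injective (by rw [map_mul, map_mul, mul_comm]) :
      (⟨g, hg⟩ * ⟨h, hh⟩ : H) = ⟨h, hh⟩ * ⟨g, hg⟩)
  exact ⟨AddSubgroup.toSubgroup.symm (H.comap translationHom),
    Subgroup.map_comap_eq_self (le_range_translationHom hH hcomm)⟩

lemma card_subgroup_index_mulEquiv_Z3 {n : ℕ} (hn : n ≠ 0) :
    Nat.card {H : Subgroup PiG3 // H.index = n ∧ Nonempty (H ≃* Z3)} =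
      Nat.card {K : AddSubgroup (Fin 3 → ℤ) // 3 * K.index = n} := by
  refine (Nat.card_eq_of_bijective (fun K => ⟨latticeSubgroup K.1,
    (index_latticeSubgroup K.1).trans K.2,
    nonempty_mulEquiv_latticeSubgroup (by have := K.2; omega)⟩) ⟨?_, ?_⟩).symm
  · exact fun K L h => Subtype.ext (latticeSubgroup_injective (congrArg Subtype.val h))
  · rintro ⟨H, hH, ⟨e⟩⟩
    obtain ⟨K, rfl⟩ := exists_latticeSubgroup_eq (hH ▸ hn) e
    exact ⟨⟨K, index_latticeSubgroup K ▸ hH⟩, rfl⟩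

/-- the number of index-`n` subgroups of `π₁(G₃)` isomorphic to `ℤ³`. -/
theorem stmt2 (n : ℕ) (hn : 0 < n) :
    Nat.card {H : Subgroup PiG3 // H.index = n ∧ Nonempty (H ≃* Z3)} =
      (if 3 ∣ n then omegaFn (n / 3) else 0) := by
  rw [card_subgroup_index_mulEquiv_Z3 hn.ne']
  split_ifs with h3
  · obtain ⟨m, rfl⟩ := h3
    simp only [mul_right_inj' three_ne_zero]
    rw [card_addSubgroup_index_eq_omegaFn (N := m) (by omega), Nat.mul_div_cancel_left m three_pos]
  · have : IsEmpty {K : AddSubgroup (Fin 3 → ℤ) // 3 * K.index = n} := ⟨fun K => h3 ⟨_, K.2.symm⟩⟩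
    exact Nat.card_of_isEmpty
end
end

section
/- Every subgroup of finite index n in the group π₁(G₅) = ℤ² ⋊ ℤ (where the generator of ℤ acts on ℤ² by the order-6 automorphism (x,y) ↦ (x−y, x)) is isomorphic, as a group, to exactly one of the following four groups: π₁(G₅), π₁(G₃), π₁(G₂), or ℤ³. -/
open scoped Classical

noncomputable section

/-!
A finite-index subgroup `H` of `ℤ² ⋊ ℤ` meets the fibre `ℤ²` in a lattice `L` and maps onto a
nonzero subgroup `kℤ` of the base; for `t ∈ H` lying over `k`, `H ≅ L ⋊ ℤ` with `t` acting on `L`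
by `ℓᵏ`, where `ℓ = ellG5` has order 6. Replacing `t` by `t⁻¹` we may assume `k ≡ 0, 1, 2, 3`
mod 6, so that `ℓᵏ` is `1`, `ℓ`, `ℓ² = ellG3` or `ℓ³ = -1`. For `1` and `-1` any basis of `L`
identifies `H` with `ℤ³` resp. `π₁(G₂)`. For `ℓ` and `ℓ²`, `L` is stable under `ellG3`, i.e. an
ideal of the Euclidean ring `ℤ[ζ] ≅ ℤ²` of Eisenstein integers, hence `L = α ℤ[ζ]`, and
multiplication by `α` intertwines the actions of `ℓᵏ` on `ℤ²` and on `L`.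

The four groups are told apart by their numbers of homomorphisms to `ℤ/6`: 6, 18, 24 and 216.
-/

open Multiplicative SemidirectProduct

lemma MulAut.forall_zpow_semiconj_iff {N M : Type*} [Mul N] [Mul M] {σ : MulAut N}
    {τ : MulAut M} {f : N → M} :
    (∀ (m : ℤ) x, f ((σ ^ m) x) = (τ ^ m) (f x)) ↔ ∀ x, f (σ x) = τ (f x) := by
  refine ⟨fun h => by simpa using h 1, fun h m => ?_⟩
  induction m using Int.induction_on with
  | zero => simp
  | succ m ih => intro x; rw [zpow_add_one, zpow_add_one, MulAut.mul_apply, ih, h]; rfl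
  | pred m ih =>
    intro x
    rw [zpow_sub_one, zpow_sub_one, MulAut.mul_apply, ih, MulAut.mul_apply]
    conv_rhs => rw [← MulAut.apply_inv_self _ σ x, h, MulAut.inv_apply_self]

namespace SemidirectProduct

section Recognition

variable {N G : Type*} [Group N] [Group G]

noncomputable def mulEquivOfConj (σ : MulAut N) (i : N →* G) (t : G)
    (hconj : ∀ n, i (σ n) = t * i n * t⁻¹) (hi : Function.Injective i)
    (hspan : ∀ g, ∃ n, ∃ m : ℤ, i n * t ^ m = g)
    (hfree : ∀ n (m : ℤ), i n * t ^ m = 1 → m = 0) :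
    N ⋊[zpowersHom _ σ] Multiplicative ℤ ≃* G :=
  MulEquiv.ofBijective
    (lift i (zpowersHom G t) fun g => by
      ext n
      induction g using Multiplicative.rec with | _ m => ?_
      simpa [map_zpow] using
        MulAut.forall_zpow_semiconj_iff (τ := MulAut.conj t).2 (by simpa using hconj) m n)
    ⟨(injective_iff_map_eq_one _).2 fun ⟨n, g⟩ h => by
      induction g using Multiplicative.rec with | _ m => ?_
      obtain rfl := hfree n m (by simpa using h)
      obtain rfl : n = 1 := by simpa [hi.eq_iff' (map_one i)] using h
      rfl,
     fun g => by
      obtain ⟨n, m, rfl⟩ := hspan g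
      exact ⟨⟨n, ofAdd m⟩, by simp⟩⟩

end Recognition

section Subgroups

variable {N' N : Type*} [Group N'] [CommGroup N] {φ : Multiplicative ℤ →* MulAut N}

lemma conj_inl (g : N ⋊[φ] Multiplicative ℤ) (n : N) : g * inl n * g⁻¹ = inl (φ g.right n) := by
  ext <;> simp [mul_comm]

lemma inl_apply_right_mem {H : Subgroup (N ⋊[φ] Multiplicative ℤ)} {t : N ⋊[φ] Multiplicative ℤ}
    (ht : t ∈ H) {n : N} (hn : inl n ∈ H) : inl (φ t.right n) ∈ H :=
  conj_inl t n ▸ H.mul_mem (H.mul_mem ht hn) (H.inv_mem ht)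

lemma exists_mem_map_rightHom_eq_zpowers (H : Subgroup (N ⋊[φ] Multiplicative ℤ))
    (hH : H.index ≠ 0) : ∃ t ∈ H, H.map rightHom = Subgroup.zpowers t.right ∧ t.right ≠ 1 := by
  obtain ⟨g, hg⟩ := (H.map rightHom).isCyclic_iff_exists_zpowers_eq_top.1 inferInstance
  obtain ⟨t, ht, rfl⟩ := Subgroup.mem_map.1 (hg ▸ Subgroup.mem_zpowers g)
  refine ⟨t, ht, hg.symm, fun h1 => ?_⟩
  obtain ⟨n, hn, -, hmem⟩ := Subgroup.exists_pow_mem_of_index_ne_zero hH (inr (ofAdd (1 : ℤ)))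
  have := hg ▸ Subgroup.mem_map_of_mem rightHom hmem
  rw [show rightHom t = 1 from h1, Subgroup.zpowers_one_eq_bot, Subgroup.mem_bot, map_pow,
    rightHom_inr, ← ofAdd_nsmul] at this
  exact hn.ne' (by simpa using this)

noncomputable def mulEquivOfSubgroup (H : Subgroup (N ⋊[φ] Multiplicative ℤ))
    {t : N ⋊[φ] Multiplicative ℤ} (ht : t ∈ H) (hgen : H.map rightHom = Subgroup.zpowers t.right)
    (htne : t.right ≠ 1) (σ : MulAut N') (i : N' →* N) (hi : Function.Injective i)
    (hrange : i.range = H.comap inl) (hσ : ∀ n, i (σ n) = φ t.right (i n)) :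
    N' ⋊[zpowersHom _ σ] Multiplicative ℤ ≃* H :=
  have hmem : ∀ n, inl (i n) ∈ H := fun n => Subgroup.mem_comap.1 (hrange ▸ ⟨n, rfl⟩)
  mulEquivOfConj σ ((inl.comp i).codRestrict H hmem) ⟨t, ht⟩
    (fun n => Subtype.ext <| by simp [conj_inl, hσ])
    (fun a b h => hi (inl_injective (congrArg Subtype.val h)))
    (fun ⟨g, hg⟩ => by
      obtain ⟨m, hm⟩ := Subgroup.mem_zpowers_iff.1 (hgen ▸ Subgroup.mem_map_of_mem rightHom hg)
      have hu : g * (t ^ m)⁻¹ ∈ H := H.mul_mem hg (H.inv_mem (H.zpow_mem ht m))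
      have hright : rightHom (g * (t ^ m)⁻¹) = 1 := by
        rw [map_mul, map_inv, map_zpow, ← hm]; exact mul_inv_cancel _
      have hinl : inl (g * (t ^ m)⁻¹).left = g * (t ^ m)⁻¹ := by
        conv_rhs => rw [← inl_left_mul_inr_right (g * (t ^ m)⁻¹)]
        rw [← rightHom_eq_right, hright, map_one, mul_one]
      obtain ⟨n, hn⟩ : (g * (t ^ m)⁻¹).left ∈ i.range := by
        rw [hrange, Subgroup.mem_comap, hinl]; exact hu
      exact ⟨n, m, Subtype.ext <| by
        change inl (i n) * t ^ m = g
        rw [hn, hinl, inv_mul_cancel_right]⟩)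
    (fun n m h => by
      have h' : inl (i n) * t ^ m = 1 := congrArg Subtype.val h
      replace h' := congrArg rightHom h'
      rw [map_mul, rightHom_inl, one_mul, map_zpow, map_one] at h'
      exact (IsMulTorsionFree.zpow_eq_one_iff_right htne).1 h')

end Subgroups

section MonoidHoms

variable {N G K : Type*} [Group N] [Group G] [CommGroup K] {φ : G →* MulAut N}

def monoidHomEquiv :
    (N ⋊[φ] G →* K) ≃ {f : N →* K // ∀ g n, f (φ g n) = f n} × (G →* K) where
  toFun Φ := (⟨Φ.comp inl, fun g n => by simp [inl_aut, mul_comm (Φ (inr g))]⟩, Φ.comp inr)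
  invFun p := lift p.1.1 p.2 fun g => by ext n; simp [p.1.2 g n]
  left_inv Φ := hom_ext (by simp) (by simp)
  right_inv p := by ext <;> simp

lemma card_monoidHom_zpowers (σ : MulAut N) :
    Nat.card (N ⋊[zpowersHom _ σ] Multiplicative ℤ →* K) =
      Nat.card {f : N →* K // ∀ n, f (σ n) = f n} * Nat.card K := by
  rw [Nat.card_congr monoidHomEquiv, Nat.card_prod, Nat.card_congr (zpowersHom K).symm]
  congr 1
  refine Nat.card_congr (Equiv.subtypeEquivRight fun f => ?_)
  simpa [Multiplicative.forall] using MulAut.forall_zpow_semiconj_iff (τ := (1 : MulAut K)) (f := f)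

end MonoidHoms

end SemidirectProduct

section PairHom

variable {A : Type*} [AddCommGroup A]

lemma AddMonoidHom.ext_prod_int {F G : (ℤ × ℤ) →+ A} (h1 : F (1, 0) = G (1, 0))
    (h2 : F (0, 1) = G (0, 1)) : F = G := by
  rw [← F.coprod_unique, ← G.coprod_unique]
  congr 1 <;> ext <;> assumption

def pairHom (p : A × A) : (ℤ × ℤ) →+ A := (zmultiplesHom A p.1).coprod (zmultiplesHom A p.2)

lemma pairHom_apply (p : A × A) (x : ℤ × ℤ) : pairHom p x = x.1 • p.1 + x.2 • p.2 := by
  simp [pairHom]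

def pairHomEquiv : A × A ≃ ((ℤ × ℤ) →+ A) where
  toFun := pairHom
  invFun F := (F (1, 0), F (0, 1))
  left_inv p := by simp [pairHom_apply]
  right_inv F := AddMonoidHom.ext_prod_int (by simp [pairHom_apply]) (by simp [pairHom_apply])

end PairHom

lemma Int.exists_two_mul_abs_sub_mul_le (c : ℤ) {n : ℤ} (hn : 0 < n) :
    ∃ q : ℤ, 2 * |c - q * n| ≤ n := by
  lift n to ℕ using hn.le
  obtain ⟨q, hq⟩ := Int.dvd_self_sub_bmod (x := c) (m := n)
  have h1 := Int.le_bmod (x := c) (by exact_mod_cast hn)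
  have h2 := Int.bmod_le (x := c) (by exact_mod_cast hn)
  refine ⟨q, ?_⟩
  rw [show c - q * n = c.bmod n by linarith]
  cases abs_cases (c.bmod n) <;> omega

lemma ellG3_apply (p : ℤ × ℤ) : ellG3 p = (-p.2, p.1 - p.2) := rfl

lemma ellG5_apply (p : ℤ × ℤ) : ellG5 p = (p.1 - p.2, p.1) := rfl

lemma ellG5_ellG5 (p : ℤ × ℤ) : ellG5 (ellG5 p) = ellG3 p := by
  simp [ellG5_apply, ellG3_apply]

namespace Eisenstein

/- `(a, b) : ℤ × ℤ` stands for `a + bζ ∈ ℤ[ζ]`, `ζ² + ζ + 1 = 0`: then `ellG3` is multiplication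
by `ζ`, `ellG5` multiplication by `1 + ζ`, and `norm` is the norm of `ℚ(ζ)/ℚ`. -/

def norm (x : ℤ × ℤ) : ℤ := x.1 ^ 2 - x.1 * x.2 + x.2 ^ 2

def mulRight (α : ℤ × ℤ) : (ℤ × ℤ) →+ (ℤ × ℤ) := pairHom (α, ellG3 α)

lemma mulRight_apply (α z : ℤ × ℤ) :
    mulRight α z = (z.1 * α.1 - z.2 * α.2, z.1 * α.2 + z.2 * α.1 - z.2 * α.2) := by
  simp only [mulRight, pairHom_apply, ellG3_apply, Prod.ext_iff, Prod.fst_add, Prod.snd_add,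
    Prod.smul_fst, Prod.smul_snd, smul_eq_mul]
  constructor <;> ring

lemma norm_mulRight (α z : ℤ × ℤ) : norm (mulRight α z) = norm z * norm α := by
  simp only [norm, mulRight_apply]; ring

lemma norm_pos {x : ℤ × ℤ} (hx : x ≠ 0) : 0 < norm x := by
  obtain ⟨a, b⟩ := x
  by_contra! h
  have hb : b = 0 := pow_eq_zero_iff two_ne_zero |>.1 <| by
    nlinarith [sq_nonneg (2 * a - b), sq_nonneg b,
      show norm (a, b) = a ^ 2 - a * b + b ^ 2 from rfl]
  subst hb
  have ha : a = 0 := pow_eq_zero_iff two_ne_zero |>.1 <| by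
    nlinarith [sq_nonneg a, show norm (a, 0) = a ^ 2 - a * 0 + 0 ^ 2 from rfl]
  exact hx (by simp [ha])

lemma mulRight_injective {α : ℤ × ℤ} (hα : α ≠ 0) : Function.Injective (mulRight α) := by
  refine (injective_iff_map_eq_zero _).2 fun z hz => ?_
  by_contra hz0
  have := norm_mulRight α z
  rw [hz] at this
  nlinarith [norm_pos hz0, norm_pos hα, show norm 0 = 0 from rfl]

lemma mulRight_ellG3 (α z : ℤ × ℤ) : mulRight α (ellG3 z) = ellG3 (mulRight α z) := by
  simp only [mulRight_apply, ellG3_apply, Prod.ext_iff]; constructor <;> ring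

lemma mulRight_ellG5 (α z : ℤ × ℤ) : mulRight α (ellG5 z) = ellG5 (mulRight α z) := by
  simp only [mulRight_apply, ellG5_apply, Prod.ext_iff]; constructor <;> ring

lemma norm_lt_sq_of_two_mul_abs_le {u v n : ℤ} (hu : 2 * |u| ≤ n) (hv : 2 * |v| ≤ n)
    (hn : 0 < n) : norm (u, v) < n ^ 2 := by
  have huv : -(u * v) ≤ |u| * |v| := by rw [← abs_mul]; exact neg_le_abs _
  have := abs_nonneg u
  have := abs_nonneg v
  simp only [norm]
  nlinarith [sq_abs u, sq_abs v]

lemma exists_norm_sub_mulRight_lt (x : ℤ × ℤ) {α : ℤ × ℤ} (hα : α ≠ 0) :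
    ∃ z, norm (x - mulRight α z) < norm α := by
  set n := norm α
  have hn : 0 < n := norm_pos hα
  -- multiplying by the conjugate `ᾱ` turns division by `α` into division by the integer `n = αᾱ`
  set c := mulRight (α.1 - α.2, -α.2) x
  obtain ⟨q₁, hq₁⟩ := Int.exists_two_mul_abs_sub_mul_le c.1 hn
  obtain ⟨q₂, hq₂⟩ := Int.exists_two_mul_abs_sub_mul_le c.2 hn
  refine ⟨(q₁, q₂), lt_of_mul_lt_mul_left ?_ hn.le⟩
  calc n * norm (x - mulRight α (q₁, q₂)) = norm (c.1 - q₁ * n, c.2 - q₂ * n) := by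
        simp only [c, n, norm, mulRight_apply, Prod.fst_sub, Prod.snd_sub]; ring
    _ < n ^ 2 := norm_lt_sq_of_two_mul_abs_le hq₁ hq₂ hn
    _ = n * n := sq n

lemma exists_range_mulRight_eq (L : AddSubgroup (ℤ × ℤ)) (hL : L ≠ ⊥)
    (hζ : ∀ x ∈ L, ellG3 x ∈ L) : ∃ α ≠ 0, (mulRight α).range = L := by
  obtain ⟨m, ⟨α, hαL, hα0, rfl⟩, hmin⟩ := Int.exists_least_of_bdd
    (P := fun m => ∃ x ∈ L, x ≠ 0 ∧ norm x = m) ⟨0, fun _ ⟨x, _, hx, hm⟩ => hm ▸ (norm_pos hx).le⟩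
    (by obtain ⟨x, hxL, hx⟩ := L.bot_or_exists_ne_zero.resolve_left hL
        exact ⟨_, x, hxL, hx, rfl⟩)
  have hmem : ∀ z, mulRight α z ∈ L := fun z => by
    rw [mulRight, pairHom_apply]
    exact L.add_mem (L.zsmul_mem hαL _) (L.zsmul_mem (hζ α hαL) _)
  refine ⟨α, hα0, le_antisymm (by rintro _ ⟨z, rfl⟩; exact hmem z) fun x hx => ?_⟩
  obtain ⟨z, hz⟩ := exists_norm_sub_mulRight_lt x hα0
  by_cases hr : x - mulRight α z = 0
  · exact ⟨z, (sub_eq_zero.1 hr).symm⟩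
  · exact absurd (hmin _ ⟨_, L.sub_mem hx (hmem z), hr, rfl⟩) hz.not_ge

end Eisenstein

lemma AddSubgroup.exists_injective_range_eq_of_index_ne_zero {L : AddSubgroup (ℤ × ℤ)}
    (hL : L.index ≠ 0) : ∃ j : (ℤ × ℤ) →+ (ℤ × ℤ), Function.Injective j ∧ j.range = L := by
  let e : (Fin 2 → ℤ) ≃+ ℤ × ℤ := (LinearEquiv.finTwoArrow ℤ ℤ).toAddEquiv
  obtain ⟨f⟩ := Int.addSubgroup_index_ne_zero_iff.1 <|
    (L.index_comap_of_surjective (f := e.toAddMonoidHom) e.surjective).trans_ne hL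
  refine ⟨e.toAddMonoidHom.comp ((L.comap e.toAddMonoidHom).subtype.comp
    (f.symm.toAddMonoidHom.comp e.symm.toAddMonoidHom)), ?_, ?_⟩
  · exact e.injective.comp (Subtype.val_injective.comp (f.symm.injective.comp e.symm.injective))
  · ext x
    constructor
    · rintro ⟨z, rfl⟩
      exact (f.symm (e.symm z)).2
    · intro hx
      refine ⟨e (f ⟨e.symm x, by simpa using hx⟩), ?_⟩
      simp only [AddMonoidHom.comp_apply, AddEquiv.coe_toAddMonoidHom, AddEquiv.symm_apply_apply,
        AddSubgroup.coe_subtype, AddEquiv.apply_symm_apply]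

abbrev MappingTorusGroup (ρ : (ℤ × ℤ) ≃+ (ℤ × ℤ)) : Type :=
  Multiplicative (ℤ × ℤ) ⋊[zpowersHom _ (AddEquiv.toMultiplicative ρ)] Multiplicative ℤ

namespace MappingTorusGroup

def reflMulEquiv : MappingTorusGroup (AddEquiv.refl (ℤ × ℤ)) ≃* Z3 :=
  (SemidirectProduct.congr (.refl _) (.refl _) fun g => by
    rw [show AddEquiv.toMultiplicative (AddEquiv.refl (ℤ × ℤ)) = 1 from rfl, zpowersHom_apply,
      one_zpow]
    rfl).trans <|
    mulEquivProd.trans <| (MulEquiv.prodMultiplicative _ _).symm.trans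
      (AddEquiv.toMultiplicative AddEquiv.prodAssoc)

lemma card_monoidHom {A : Type*} [AddCommGroup A] (ρ : (ℤ × ℤ) ≃+ (ℤ × ℤ)) :
    Nat.card (MappingTorusGroup ρ →* Multiplicative A) =
      Nat.card {p : A × A // pairHom p (ρ (1, 0)) = p.1 ∧ pairHom p (ρ (0, 1)) = p.2} *
        Nat.card A := by
  rw [card_monoidHom_zpowers, Nat.card_congr Multiplicative.toAdd (α := A)]
  congr 1
  symm
  refine Nat.card_congr ((Equiv.subtypeEquiv pairHomEquiv fun p => ?_).trans
    (Equiv.subtypeEquiv AddMonoidHom.toMultiplicative fun F => Iff.rfl))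
  change _ ↔ ∀ x, pairHom p (ρ x) = pairHom p x
  refine ⟨fun ⟨h1, h2⟩ x =>
    DFunLike.congr_fun (?_ : (pairHom p).comp ρ.toAddMonoidHom = pairHom p) x, fun h => ⟨?_, ?_⟩⟩
  · exact AddMonoidHom.ext_prod_int (by simpa [pairHom_apply] using h1)
      (by simpa [pairHom_apply] using h2)
  · simpa [pairHom_apply] using h (1, 0)
  · simpa [pairHom_apply] using h (0, 1)

end MappingTorusGroup

namespace PiG5

lemma phiG5_ofAdd_cases (k : ℤ) (hk : k % 6 < 4) :
    phiG5 (ofAdd k) = AddEquiv.toMultiplicative (AddEquiv.refl _) ∨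
      phiG5 (ofAdd k) = AddEquiv.toMultiplicative ellG5 ∨
      phiG5 (ofAdd k) = AddEquiv.toMultiplicative ellG3 ∨
      phiG5 (ofAdd k) = AddEquiv.toMultiplicative ellG2 := by
  have h6 : (AddEquiv.toMultiplicative ellG5 : MulAut (Multiplicative (ℤ × ℤ))) ^ (6 : ℤ) = 1 := by
    ext x <;> simp [zpow_ofNat, pow_succ, ellG5]
  rw [phiG5, zpowersHom_apply, toAdd_ofAdd, zpow_eq_zpow_emod k h6]
  have : k % 6 = 0 ∨ k % 6 = 1 ∨ k % 6 = 2 ∨ k % 6 = 3 := by omega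
  rcases this with h | h | h | h <;> rw [h]
  · exact Or.inl rfl
  · exact Or.inr (Or.inl (zpow_one _))
  · refine Or.inr (Or.inr (Or.inl ?_))
    ext x <;> simp [zpow_ofNat, pow_succ, ellG5, ellG3]
  · refine Or.inr (Or.inr (Or.inr ?_))
    ext x <;> simp [zpow_ofNat, pow_succ, ellG5, ellG2]
    ring

lemma nonempty_mulEquiv_mappingTorusGroup {H : Subgroup PiG5} {t : PiG5} (ht : t ∈ H)
    (hgen : H.map rightHom = Subgroup.zpowers t.right) (htne : t.right ≠ 1)
    {ρ : (ℤ × ℤ) ≃+ (ℤ × ℤ)} (hρ : phiG5 t.right = AddEquiv.toMultiplicative ρ)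
    {j : (ℤ × ℤ) →+ (ℤ × ℤ)} (hj : Function.Injective j)
    (hjL : j.range = (H.comap inl).toAddSubgroup') (hjρ : ∀ z, j (ρ z) = ρ (j z)) :
    Nonempty (H ≃* MappingTorusGroup ρ) :=
  ⟨(mulEquivOfSubgroup H ht hgen htne _ (AddMonoidHom.toMultiplicative j) hj
    (Subgroup.toAddSubgroup'.injective hjL) fun n => by rw [hρ]; exact congrArg ofAdd (hjρ _)).symm⟩

theorem nonempty_mulEquiv_of_generator {H : Subgroup PiG5} (hH : H.index ≠ 0) {t : PiG5}
    (ht : t ∈ H) (hgen : H.map rightHom = Subgroup.zpowers t.right) (htne : t.right ≠ 1)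
    (hk : toAdd t.right % 6 < 4) :
    Nonempty (H ≃* PiG5) ∨ Nonempty (H ≃* PiG3) ∨ Nonempty (H ≃* PiG2) ∨ Nonempty (H ≃* Z3) := by
  set L := (H.comap inl).toAddSubgroup'
  have hLρ {ρ : (ℤ × ℤ) ≃+ (ℤ × ℤ)} (hρ : phiG5 t.right = AddEquiv.toMultiplicative ρ) :
      ∀ p ∈ L, ρ p ∈ L := fun p hp => by
    simpa [L, hρ] using inl_apply_right_mem ht (n := ofAdd p) hp
  have hL : L.index ≠ 0 := by
    have : H.FiniteIndex := ⟨hH⟩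
    have := Subgroup.isFiniteRelIndex_of_finiteIndex (H := H) (K := inl.range)
    exact (Subgroup.index_comap H inl).trans_ne Subgroup.relIndex_ne_zero
  have hLne : L ≠ ⊥ := fun h => hL <| by
    rw [h, AddSubgroup.index_bot, Nat.card_eq_zero_of_infinite]
  obtain ⟨j, hj, hjL⟩ := AddSubgroup.exists_injective_range_eq_of_index_ne_zero hL
  rcases phiG5_ofAdd_cases _ hk with hρ | hρ | hρ | hρ
  · exact Or.inr <| Or.inr <| Or.inr <|
      (nonempty_mulEquiv_mappingTorusGroup ht hgen htne hρ hj hjL fun _ => rfl).map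
        (·.trans MappingTorusGroup.reflMulEquiv)
  · obtain ⟨α, hα, hαL⟩ := Eisenstein.exists_range_mulRight_eq L hLne fun p hp =>
      ellG5_ellG5 p ▸ hLρ hρ _ (hLρ hρ p hp)
    exact Or.inl <| nonempty_mulEquiv_mappingTorusGroup ht hgen htne hρ
      (Eisenstein.mulRight_injective hα) hαL (Eisenstein.mulRight_ellG5 α)
  · obtain ⟨α, hα, hαL⟩ := Eisenstein.exists_range_mulRight_eq L hLne (hLρ hρ)
    exact Or.inr <| Or.inl <| nonempty_mulEquiv_mappingTorusGroup ht hgen htne hρ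
      (Eisenstein.mulRight_injective hα) hαL (Eisenstein.mulRight_ellG3 α)
  · exact Or.inr <| Or.inr <| Or.inl <|
      nonempty_mulEquiv_mappingTorusGroup ht hgen htne hρ hj hjL fun z => map_neg j z

theorem nonempty_mulEquiv_of_index_ne_zero (H : Subgroup PiG5) (hH : H.index ≠ 0) :
    Nonempty (H ≃* PiG5) ∨ Nonempty (H ≃* PiG3) ∨ Nonempty (H ≃* PiG2) ∨ Nonempty (H ≃* Z3) := by
  obtain ⟨t, ht, hgen, htne⟩ := exists_mem_map_rightHom_eq_zpowers H hH
  by_cases hk : toAdd t.right % 6 < 4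
  · exact nonempty_mulEquiv_of_generator hH ht hgen htne hk
  · refine nonempty_mulEquiv_of_generator hH (H.inv_mem ht) (by simpa using hgen)
      (by simpa using htne) ?_
    simp only [inv_right, toAdd_inv]
    omega

end PiG5

@[simp]
lemma card_monoidHom_piG5 : Nat.card (PiG5 →* Multiplicative (ZMod 6)) = 6 :=
  (MappingTorusGroup.card_monoidHom ellG5).trans <| by
    rw [Nat.card_eq_fintype_card, Nat.card_zmod]; decide

@[simp]
lemma card_monoidHom_piG3 : Nat.card (PiG3 →* Multiplicative (ZMod 6)) = 18 :=
  (MappingTorusGroup.card_monoidHom ellG3).trans <| by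
    rw [Nat.card_eq_fintype_card, Nat.card_zmod]; decide

@[simp]
lemma card_monoidHom_piG2 : Nat.card (PiG2 →* Multiplicative (ZMod 6)) = 24 :=
  (MappingTorusGroup.card_monoidHom ellG2).trans <| by
    rw [Nat.card_eq_fintype_card, Nat.card_zmod]; decide

@[simp]
lemma card_monoidHom_z3 : Nat.card (Z3 →* Multiplicative (ZMod 6)) = 216 := by
  rw [← Nat.card_congr MappingTorusGroup.reflMulEquiv.monoidHomCongrLeftEquiv,
    MappingTorusGroup.card_monoidHom, Nat.card_eq_fintype_card, Nat.card_zmod]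
  decide

lemma not_nonempty_mulEquiv_of_card_monoidHom_ne {G X Y : Type*} [Group G] [Group X] [Group Y]
    (K : Type*) [Monoid K] (e : G ≃* X) (h : Nat.card (X →* K) ≠ Nat.card (Y →* K)) :
    ¬Nonempty (G ≃* Y) :=
  fun ⟨f⟩ => h (Nat.card_congr (e.symm.trans f).monoidHomCongrLeftEquiv)

/-- every finite-index subgroup of `π₁(G₅)` is isomorphic to exactly one of
`π₁(G₅)`, `π₁(G₃)`, `π₁(G₂)`, `ℤ³`. -/
theorem stmt5 (n : ℕ) (hn : 0 < n) (H : Subgroup PiG5) (hH : H.index = n) :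
    (Nonempty (H ≃* PiG5) ∧ ¬Nonempty (H ≃* PiG3) ∧ ¬Nonempty (H ≃* PiG2) ∧
        ¬Nonempty (H ≃* Z3)) ∨
    (¬Nonempty (H ≃* PiG5) ∧ Nonempty (H ≃* PiG3) ∧ ¬Nonempty (H ≃* PiG2) ∧
        ¬Nonempty (H ≃* Z3)) ∨
    (¬Nonempty (H ≃* PiG5) ∧ ¬Nonempty (H ≃* PiG3) ∧ Nonempty (H ≃* PiG2) ∧
        ¬Nonempty (H ≃* Z3)) ∨
    (¬Nonempty (H ≃* PiG5) ∧ ¬Nonempty (H ≃* PiG3) ∧ ¬Nonempty (H ≃* PiG2) ∧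
        Nonempty (H ≃* Z3)) := by
  rcases PiG5.nonempty_mulEquiv_of_index_ne_zero H (hH ▸ hn.ne') with ⟨⟨e⟩⟩ | ⟨⟨e⟩⟩ | ⟨⟨e⟩⟩ | ⟨⟨e⟩⟩
  · refine Or.inl ⟨⟨e⟩, ?_, ?_, ?_⟩ <;>
      exact not_nonempty_mulEquiv_of_card_monoidHom_ne (Multiplicative (ZMod 6)) e (by simp)
  · refine Or.inr <| Or.inl ⟨?_, ⟨e⟩, ?_, ?_⟩ <;>
      exact not_nonempty_mulEquiv_of_card_monoidHom_ne (Multiplicative (ZMod 6)) e (by simp)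
  · refine Or.inr <| Or.inr <| Or.inl ⟨?_, ?_, ⟨e⟩, ?_⟩ <;>
      exact not_nonempty_mulEquiv_of_card_monoidHom_ne (Multiplicative (ZMod 6)) e (by simp)
  · refine Or.inr <| Or.inr <| Or.inr ⟨?_, ?_, ?_, ⟨e⟩⟩ <;>
      exact not_nonempty_mulEquiv_of_card_monoidHom_ne (Multiplicative (ZMod 6)) e (by simp)
end
end

section
/- Every subgroup Δ of finite index n in ℤ³ has a triple of generators of the form (a,0,0), (μ,b,0), (ν,λ,c), where a, b, c are positive integers with abc = n, μ, ν are integers with 0 ≤ μ, ν < a, and λ is an integer with 0 ≤ λ < b; distinct such triples generate distinct subgroups, so the subgroups of index n in ℤ³ are in bijection with such triples, and their number is ω(n) = Σ_{k | n} k·σ₁(k). -/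
open scoped Classical

noncomputable section

/-!
Hermite normal form. For `Δ` of finite index let `c` generate the third coordinates of `Δ`, `b` the
second coordinates of `Δ ∩ (ℤ² × 0)` and `a` the first coordinates of `Δ ∩ (ℤ × 0 × 0)`. Lifts
`(ν, λ, c)`, `(μ, b, 0)`, `(a, 0, 0)` in `Δ` generate `Δ`: subtracting multiples of them kills the
coordinates of an element of `Δ` one at a time, from the last. Reducing `λ` modulo `b` and `μ, ν`
modulo `a` by the same row operations normalises them, and since `a`, `b`, `c` and then the reduced
entries can be read off the subgroup, the normal form is unique. The index is the determinant
`a * b * c`, so the subgroups of index `n` number `∑_{abc = n} a² b = ∑_{k ∣ n} k σ₁(k)`, `k = a * b`.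
-/

theorem AddSubgroup.index_closure_range_eq_natAbs_det {E ι : Type*} [AddCommGroup E] [Fintype ι]
    [DecidableEq ι] (b : Module.Basis ι ℤ E) {v : ι → E} (hv : b.det v ≠ 0) :
    (AddSubgroup.closure (Set.range v)).index = (b.det v).natAbs := by
  have hli : LinearIndependent ℤ v := by
    by_contra h
    exact hv (b.det.map_linearDependent v h)
  rw [← Submodule.span_int_eq_addSubgroupClosure,
    AddSubgroup.index_eq_natAbs_det b _ (Module.Basis.span hli)]
  congr 2
  ext i
  simp [Module.Basis.span_apply hli i]

theorem Int.eq_of_dvd_sub {m x y : ℤ} (h : m ∣ x - y) (hx₀ : 0 ≤ x) (hx : x < m) (hy₀ : 0 ≤ y)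
    (hy : y < m) : x = y :=
  sub_eq_zero.1 (Int.eq_zero_of_abs_lt_dvd h (abs_sub_lt_of_nonneg_of_lt hx₀ hx hy₀ hy))

theorem Int.exists_forall_mem_iff_natCast_dvd (H : AddSubgroup ℤ) :
    ∃ m : ℕ, ∀ x, x ∈ H ↔ (m : ℤ) ∣ x := by
  obtain ⟨g, rfl⟩ := Int.subgroup_cyclic H
  exact ⟨g.natAbs, fun x => by
    rw [← AddSubgroup.zmultiples_eq_closure, Int.mem_zmultiples_iff, Int.natAbs_dvd]⟩

@[simps]
def tripleEquivFinThree : (ℤ × ℤ × ℤ) ≃ₗ[ℤ] (Fin 3 → ℤ) where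
  toFun v := ![v.1, v.2.1, v.2.2]
  invFun f := (f 0, f 1, f 2)
  map_add' _ _ := by ext i; fin_cases i <;> rfl
  map_smul' _ _ := by ext i; fin_cases i <;> rfl
  left_inv _ := rfl
  right_inv f := by ext i; fin_cases i <;> rfl

def hnfLattice (a b c : ℕ) (μ ν lam : ℤ) : AddSubgroup (ℤ × ℤ × ℤ) :=
  AddSubgroup.closure {((a : ℤ), 0, 0), (μ, (b : ℤ), 0), (ν, lam, (c : ℤ))}

def IsReducedHNF (a b : ℕ) (μ ν lam : ℤ) : Prop :=
  0 ≤ μ ∧ μ < a ∧ 0 ≤ ν ∧ ν < a ∧ 0 ≤ lam ∧ lam < b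

theorem hnfLattice_eq_closure_range (a b c : ℕ) (μ ν lam : ℤ) :
    hnfLattice a b c μ ν lam =
      AddSubgroup.closure (Set.range ![((a : ℤ), 0, 0), (μ, (b : ℤ), 0), (ν, lam, (c : ℤ))]) := by
  rw [hnfLattice, Matrix.range_cons, Matrix.range_cons_cons_empty, Set.singleton_union]

section hnfLattice

variable {a b c : ℕ} {μ ν lam : ℤ}

theorem mem_hnfLattice {x y z : ℤ} :
    (x, y, z) ∈ hnfLattice a b c μ ν lam ↔
      ∃ p q r : ℤ, x = p * a + q * μ + r * ν ∧ y = q * b + r * lam ∧ z = r * c := by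
  rw [hnfLattice_eq_closure_range, AddSubgroup.mem_closure_range_iff_of_fintype]
  simp [Fin.sum_univ_three, Fin.exists_fin_succ_pi, Prod.ext_iff, -zsmul_eq_mul]

theorem index_hnfLattice (h : a * b * c ≠ 0) :
    (hnfLattice a b c μ ν lam).index = a * b * c := by
  have hdet : (Module.Basis.ofEquivFun tripleEquivFinThree).det
      ![((a : ℤ), 0, 0), (μ, (b : ℤ), 0), (ν, lam, (c : ℤ))] = a * b * c := by
    simp [Module.Basis.det_apply, Module.Basis.toMatrix_apply, Matrix.det_fin_three]
  rw [hnfLattice_eq_closure_range,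
    AddSubgroup.index_closure_range_eq_natAbs_det (Module.Basis.ofEquivFun tripleEquivFinThree)
      (by rw [hdet]; exact_mod_cast h), hdet]
  norm_cast

theorem mk_mem_hnfLattice₁ : ((a : ℤ), 0, 0) ∈ hnfLattice a b c μ ν lam :=
  AddSubgroup.subset_closure (by simp)

theorem mk_mem_hnfLattice₂ : (μ, (b : ℤ), 0) ∈ hnfLattice a b c μ ν lam :=
  AddSubgroup.subset_closure (by simp)

theorem mk_mem_hnfLattice₃ : (ν, lam, (c : ℤ)) ∈ hnfLattice a b c μ ν lam :=
  AddSubgroup.subset_closure (by simp)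

theorem dvd_of_mem_hnfLattice {x y z : ℤ} (h : (x, y, z) ∈ hnfLattice a b c μ ν lam) :
    (c : ℤ) ∣ z := by
  obtain ⟨p, q, r, -, -, rfl⟩ := mem_hnfLattice.1 h
  exact dvd_mul_left _ _

theorem dvd_of_mk_zero_mem_hnfLattice (hc : c ≠ 0) {x y : ℤ}
    (h : (x, y, 0) ∈ hnfLattice a b c μ ν lam) : (b : ℤ) ∣ y := by
  obtain ⟨p, q, r, -, rfl, hr⟩ := mem_hnfLattice.1 h
  obtain rfl : r = 0 := by simpa [hc] using hr.symm
  simp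

theorem dvd_of_mk_zero_zero_mem_hnfLattice (hb : b ≠ 0) (hc : c ≠ 0) {x : ℤ}
    (h : (x, 0, 0) ∈ hnfLattice a b c μ ν lam) : (a : ℤ) ∣ x := by
  obtain ⟨p, q, r, rfl, hq, hr⟩ := mem_hnfLattice.1 h
  obtain rfl : r = 0 := by simpa [hc] using hr.symm
  obtain rfl : q = 0 := by simpa [hb] using hq.symm
  simp

theorem le_hnfLattice {Δ : AddSubgroup (ℤ × ℤ × ℤ)}
    (hc : ∀ v ∈ Δ, (c : ℤ) ∣ v.2.2) (hb : ∀ x y : ℤ, (x, y, 0) ∈ Δ → (b : ℤ) ∣ y)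
    (ha : ∀ x : ℤ, (x, 0, 0) ∈ Δ → (a : ℤ) ∣ x)
    (h₂ : (μ, (b : ℤ), 0) ∈ Δ) (h₃ : (ν, lam, (c : ℤ)) ∈ Δ) :
    Δ ≤ hnfLattice a b c μ ν lam := by
  rintro ⟨x, y, z⟩ hv
  obtain ⟨r, rfl⟩ := hc _ hv
  have hv₂ : (x - r * ν, y - r * lam, 0) ∈ Δ := by
    convert Δ.sub_mem hv (Δ.zsmul_mem h₃ r) using 1
    simp [mul_comm]
  obtain ⟨q, hq⟩ := hb _ _ hv₂
  have hv₁ : (x - r * ν - q * μ, 0, 0) ∈ Δ := by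
    convert Δ.sub_mem hv₂ (Δ.zsmul_mem h₂ q) using 1
    simp only [Prod.smul_mk, Int.zsmul_eq_mul, mul_zero, Prod.mk_sub_mk, sub_self, Prod.mk.injEq,
      and_true, true_and]
    linear_combination -hq
  obtain ⟨p, hp⟩ := ha _ hv₁
  exact mem_hnfLattice.2 ⟨p, q, r, by linear_combination hp, by linear_combination hq, by ring⟩

theorem eq_of_hnfLattice_eq {a' b' c' : ℕ} {μ' ν' lam' : ℤ} (hc : c ≠ 0) (hc' : c' ≠ 0)
    (hr : IsReducedHNF a b μ ν lam) (hr' : IsReducedHNF a' b' μ' ν' lam')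
    (h : hnfLattice a b c μ ν lam = hnfLattice a' b' c' μ' ν' lam') :
    a = a' ∧ b = b' ∧ c = c' ∧ μ = μ' ∧ ν = ν' ∧ lam = lam' := by
  obtain ⟨hμ₀, hμ, hν₀, hν, hl₀, hl⟩ := hr
  obtain ⟨hμ₀', hμ', hν₀', hν', hl₀', hl'⟩ := hr'
  have hb : b ≠ 0 := by omega
  have hb' : b' ≠ 0 := by omega
  have h₁ := (h ▸ mk_mem_hnfLattice₁ : ((a' : ℤ), 0, 0) ∈ hnfLattice a b c μ ν lam)
  have h₁' := (h ▸ mk_mem_hnfLattice₁ : ((a : ℤ), 0, 0) ∈ hnfLattice a' b' c' μ' ν' lam')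
  have h₂ := (h ▸ mk_mem_hnfLattice₂ : (μ', (b' : ℤ), 0) ∈ hnfLattice a b c μ ν lam)
  have h₂' := (h ▸ mk_mem_hnfLattice₂ : (μ, (b : ℤ), 0) ∈ hnfLattice a' b' c' μ' ν' lam')
  have h₃ := (h ▸ mk_mem_hnfLattice₃ : (ν', lam', (c' : ℤ)) ∈ hnfLattice a b c μ ν lam)
  have h₃' := (h ▸ mk_mem_hnfLattice₃ : (ν, lam, (c : ℤ)) ∈ hnfLattice a' b' c' μ' ν' lam')
  obtain rfl : c = c' := Nat.dvd_antisymm (by exact_mod_cast dvd_of_mem_hnfLattice h₃)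
    (by exact_mod_cast dvd_of_mem_hnfLattice h₃')
  obtain rfl : b = b' := Nat.dvd_antisymm (by exact_mod_cast dvd_of_mk_zero_mem_hnfLattice hc h₂)
    (by exact_mod_cast dvd_of_mk_zero_mem_hnfLattice hc h₂')
  obtain rfl : a = a' := Nat.dvd_antisymm
    (by exact_mod_cast dvd_of_mk_zero_zero_mem_hnfLattice hb hc h₁)
    (by exact_mod_cast dvd_of_mk_zero_zero_mem_hnfLattice hb hc h₁')
  have h₃₃ : (ν - ν', lam - lam', 0) ∈ hnfLattice a b c μ ν lam := by
    simpa using sub_mem mk_mem_hnfLattice₃ h₃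
  obtain rfl : lam = lam' :=
    Int.eq_of_dvd_sub (dvd_of_mk_zero_mem_hnfLattice hc h₃₃) hl₀ hl hl₀' hl'
  have h₂₂ : (μ - μ', 0, 0) ∈ hnfLattice a b c μ ν lam := by
    convert sub_mem mk_mem_hnfLattice₂ h₂ using 1
    simp [Prod.ext_iff]
  refine ⟨rfl, rfl, rfl, ?_, ?_, rfl⟩
  · exact Int.eq_of_dvd_sub (dvd_of_mk_zero_zero_mem_hnfLattice hb hc h₂₂) hμ₀ hμ hμ₀' hμ'
  · exact Int.eq_of_dvd_sub (dvd_of_mk_zero_zero_mem_hnfLattice hb hc (by simpa using h₃₃))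
      hν₀ hν hν₀' hν'

end hnfLattice

theorem emod_mk_mem {Δ : AddSubgroup (ℤ × ℤ × ℤ)} {m x y z : ℤ} (hv : (x, y, z) ∈ Δ)
    (hm : (m, 0, 0) ∈ Δ) : (x % m, y, z) ∈ Δ := by
  convert Δ.sub_mem hv (Δ.zsmul_mem hm (x / m)) using 1
  simp [Int.emod_def, mul_comm]

theorem mk_emod_mem {Δ : AddSubgroup (ℤ × ℤ × ℤ)} {m μ x y z : ℤ} (hv : (x, y, z) ∈ Δ)
    (hm : (μ, m, 0) ∈ Δ) : (x - y / m * μ, y % m, z) ∈ Δ := by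
  convert Δ.sub_mem hv (Δ.zsmul_mem hm (y / m)) using 1
  simp [Int.emod_def, mul_comm]

theorem exists_hnfLattice_eq (Δ : AddSubgroup (ℤ × ℤ × ℤ)) (hΔ : Δ.index ≠ 0) :
    ∃ a b c : ℕ, ∃ μ ν lam : ℤ, 0 < a ∧ 0 < b ∧ 0 < c ∧ IsReducedHNF a b μ ν lam ∧
      hnfLattice a b c μ ν lam = Δ := by
  have hn : ∀ v, Δ.index • v ∈ Δ := Δ.nsmul_index_mem
  have hn₀ : 0 < Δ.index := Nat.pos_of_ne_zero hΔ
  obtain ⟨c, hc⟩ : ∃ c : ℕ, ∀ z : ℤ, (∃ x y, (x, y, z) ∈ Δ) ↔ (c : ℤ) ∣ z := by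
    simpa using Int.exists_forall_mem_iff_natCast_dvd
      (Δ.map ((AddMonoidHom.snd ℤ ℤ).comp (AddMonoidHom.snd ℤ (ℤ × ℤ))))
  obtain ⟨b, hb⟩ : ∃ b : ℕ, ∀ y : ℤ, (∃ x, (x, y, 0) ∈ Δ) ↔ (b : ℤ) ∣ y := by
    simpa using Int.exists_forall_mem_iff_natCast_dvd
      ((Δ.comap ((AddMonoidHom.id ℤ).prodMap (AddMonoidHom.inl ℤ ℤ))).map (AddMonoidHom.snd ℤ ℤ))
  obtain ⟨a, ha⟩ : ∃ a : ℕ, ∀ x : ℤ, (x, 0, 0) ∈ Δ ↔ (a : ℤ) ∣ x :=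
    Int.exists_forall_mem_iff_natCast_dvd (Δ.comap (AddMonoidHom.inl ℤ (ℤ × ℤ)))
  have hc₀ : 0 < c := Nat.pos_of_dvd_of_pos
    (Int.natCast_dvd_natCast.1 ((hc _).1 ⟨0, 0, by simpa using hn (0, 0, 1)⟩)) hn₀
  have hb₀ : 0 < b := Nat.pos_of_dvd_of_pos
    (Int.natCast_dvd_natCast.1 ((hb _).1 ⟨0, by simpa using hn (0, 1, 0)⟩)) hn₀
  have ha₀ : 0 < a := Nat.pos_of_dvd_of_pos
    (Int.natCast_dvd_natCast.1 ((ha _).1 (by simpa using hn (1, 0, 0)))) hn₀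
  obtain ⟨ν, lam, h₃⟩ := (hc c).2 dvd_rfl
  obtain ⟨μ, h₂⟩ := (hb b).2 dvd_rfl
  have h₁ := (ha a).2 dvd_rfl
  have h₂' := emod_mk_mem h₂ h₁
  have h₃' := emod_mk_mem (mk_emod_mem h₃ h₂') h₁
  refine ⟨a, b, c, μ % a, (ν - lam / b * (μ % a)) % a, lam % b, ha₀, hb₀, hc₀, ?_, ?_⟩
  · have ha' : (0 : ℤ) < a := by exact_mod_cast ha₀
    have hb' : (0 : ℤ) < b := by exact_mod_cast hb₀
    exact ⟨Int.emod_nonneg _ ha'.ne', Int.emod_lt_of_pos _ ha', Int.emod_nonneg _ ha'.ne',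
      Int.emod_lt_of_pos _ ha', Int.emod_nonneg _ hb'.ne', Int.emod_lt_of_pos _ hb'⟩
  refine le_antisymm ?_ (le_hnfLattice (fun v hv => (hc _).1 ⟨_, _, hv⟩)
    (fun x y h => (hb y).1 ⟨x, h⟩) (fun x h => (ha x).1 h) h₂' h₃')
  rw [hnfLattice, AddSubgroup.closure_le]
  simp [Set.insert_subset_iff, h₁, h₂', h₃']

/-- Triples `(a, b, c)` with `a * b * c = n`, listed as `k * c = n`, `a * b = k`. -/
def divisorTriples (n : ℕ) : Finset (ℕ × ℕ × ℕ) :=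
  ((n.divisorsAntidiagonal).sigma fun kc => kc.1.divisorsAntidiagonal).image
    fun x => (x.2.1, x.2.2, x.1.2)

theorem mem_divisorTriples {n : ℕ} {d : ℕ × ℕ × ℕ} :
    d ∈ divisorTriples n ↔ d.1 * d.2.1 * d.2.2 = n ∧ n ≠ 0 := by
  obtain ⟨a, b, c⟩ := d
  simp only [divisorTriples, Finset.mem_image, Finset.mem_sigma, Nat.mem_divisorsAntidiagonal]
  constructor
  · rintro ⟨⟨⟨k, c⟩, a, b⟩, ⟨⟨rfl, hn⟩, hk, -⟩, h⟩
    simp only [Prod.mk.injEq] at h hk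
    obtain ⟨rfl, rfl, rfl⟩ := h
    exact ⟨hk ▸ rfl, hn⟩
  · rintro ⟨rfl, hn⟩
    refine ⟨⟨⟨a * b, c⟩, a, b⟩, ⟨⟨rfl, hn⟩, rfl, fun h => hn ?_⟩, rfl⟩
    simp_all

theorem sum_divisorTriples {M : Type*} [AddCommMonoid M] (n : ℕ) (f : ℕ × ℕ × ℕ → M) :
    ∑ d ∈ divisorTriples n, f d =
      ∑ kc ∈ n.divisorsAntidiagonal, ∑ ab ∈ kc.1.divisorsAntidiagonal, f (ab.1, ab.2, kc.2) := by
  rw [divisorTriples, Finset.sum_image, Finset.sum_sigma]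
  rintro ⟨⟨k, c⟩, a, b⟩ hx ⟨⟨k', c'⟩, a', b'⟩ hy h
  simp only [Finset.coe_sigma, Set.mem_sigma_iff, Finset.mem_coe,
    Nat.mem_divisorsAntidiagonal] at hx hy
  simp only [Prod.mk.injEq] at h
  obtain ⟨rfl, rfl, rfl⟩ := h
  obtain rfl := hx.2.1.symm.trans hy.2.1
  rfl

theorem sum_divisorsAntidiagonal_fst_mul_mul (k : ℕ) :
    ∑ ab ∈ k.divisorsAntidiagonal, ab.1 * (ab.1 * ab.2) = k * sigma1 k := calc
  _ = ∑ ab ∈ k.divisorsAntidiagonal, ab.1 * k :=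
    Finset.sum_congr rfl fun ab hab => by rw [(Nat.mem_divisorsAntidiagonal.1 hab).1]
  _ = k * sigma1 k := by
    rw [← Finset.sum_mul, Nat.sum_divisorsAntidiagonal fun a _ => a, sigma1, mul_comm]

def hnfParams (n : ℕ) : Finset (Σ _ : ℕ × ℕ × ℕ, ℤ × ℤ × ℤ) :=
  (divisorTriples n).sigma fun d =>
    Finset.Ico 0 (d.1 : ℤ) ×ˢ Finset.Ico 0 (d.1 : ℤ) ×ˢ Finset.Ico 0 (d.2.1 : ℤ)

theorem mem_hnfParams {n : ℕ} {x : Σ _ : ℕ × ℕ × ℕ, ℤ × ℤ × ℤ} :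
    x ∈ hnfParams n ↔ (x.1.1 * x.1.2.1 * x.1.2.2 = n ∧ n ≠ 0) ∧
      IsReducedHNF x.1.1 x.1.2.1 x.2.1 x.2.2.1 x.2.2.2 := by
  simp [hnfParams, mem_divisorTriples, IsReducedHNF, and_assoc]

theorem card_hnfParams (n : ℕ) : (hnfParams n).card = omegaFn n := by
  simp only [hnfParams, Finset.card_sigma, Finset.card_product, Int.card_Ico, sub_zero,
    Int.toNat_natCast]
  rw [sum_divisorTriples, omegaFn, ← Nat.sum_divisorsAntidiagonal (fun k _ => k * sigma1 k)]
  exact Finset.sum_congr rfl fun kc _ => sum_divisorsAntidiagonal_fst_mul_mul kc.1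

theorem card_index_eq_omegaFn {n : ℕ} (hn : n ≠ 0) :
    Nat.card {Δ : AddSubgroup (ℤ × ℤ × ℤ) // Δ.index = n} = omegaFn n := by
  let L : (Σ _ : ℕ × ℕ × ℕ, ℤ × ℤ × ℤ) → AddSubgroup (ℤ × ℤ × ℤ) :=
    fun x => hnfLattice x.1.1 x.1.2.1 x.1.2.2 x.2.1 x.2.2.1 x.2.2.2
  have himage : L '' hnfParams n = {Δ | Δ.index = n} := by
    ext Δ
    constructor
    · rintro ⟨x, hx, rfl⟩
      obtain ⟨⟨habc, -⟩, -⟩ := mem_hnfParams.1 hx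
      exact (index_hnfLattice (habc ▸ hn)).trans habc
    · intro hΔ
      obtain ⟨a, b, c, μ, ν, lam, ha, hb, hc, hr, rfl⟩ := exists_hnfLattice_eq Δ (hΔ ▸ hn)
      refine ⟨⟨(a, b, c), (μ, ν, lam)⟩, mem_hnfParams.2 ⟨⟨?_, hn⟩, hr⟩, rfl⟩
      exact (index_hnfLattice (by positivity)).symm.trans hΔ
  have hinj : Set.InjOn L (hnfParams n) := by
    rintro ⟨⟨a, b, c⟩, μ, ν, lam⟩ hx ⟨⟨a', b', c'⟩, μ', ν', lam'⟩ hy h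
    obtain ⟨⟨habc, -⟩, hr⟩ := mem_hnfParams.1 hx
    obtain ⟨⟨habc', -⟩, hr'⟩ := mem_hnfParams.1 hy
    obtain ⟨rfl, rfl, rfl, rfl, rfl, rfl⟩ := eq_of_hnfLattice_eq
      (right_ne_zero_of_mul (habc ▸ hn)) (right_ne_zero_of_mul (habc' ▸ hn)) hr hr' h
    rfl
  rw [← card_hnfParams, ← Set.ncard_coe_finset, ← hinj.ncard_image, himage, ← Nat.card_coe_set_eq]
  rfl

/-- classification and count of index-`n` subgroups of `ℤ³`. -/
theorem stmt15 (n : ℕ) (hn : 0 < n) :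
    (∀ Δ : AddSubgroup (ℤ × ℤ × ℤ), Δ.index = n →
      ∃ a b c : ℕ, ∃ μ ν lam : ℤ,
        0 < a ∧ 0 < b ∧ 0 < c ∧ a * b * c = n ∧
        0 ≤ μ ∧ μ < (a : ℤ) ∧ 0 ≤ ν ∧ ν < (a : ℤ) ∧ 0 ≤ lam ∧ lam < (b : ℤ) ∧
        AddSubgroup.closure
          {((a : ℤ), (0 : ℤ), (0 : ℤ)), (μ, (b : ℤ), (0 : ℤ)), (ν, lam, (c : ℤ))} = Δ) ∧
    (∀ a b c a' b' c' : ℕ, ∀ μ ν lam μ' ν' lam' : ℤ,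
      (0 < a ∧ 0 < b ∧ 0 < c ∧ a * b * c = n ∧
        0 ≤ μ ∧ μ < (a : ℤ) ∧ 0 ≤ ν ∧ ν < (a : ℤ) ∧ 0 ≤ lam ∧ lam < (b : ℤ)) →
      (0 < a' ∧ 0 < b' ∧ 0 < c' ∧ a' * b' * c' = n ∧
        0 ≤ μ' ∧ μ' < (a' : ℤ) ∧ 0 ≤ ν' ∧ ν' < (a' : ℤ) ∧ 0 ≤ lam' ∧ lam' < (b' : ℤ)) →
      AddSubgroup.closure
          {((a : ℤ), (0 : ℤ), (0 : ℤ)), (μ, (b : ℤ), (0 : ℤ)), (ν, lam, (c : ℤ))} =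
        AddSubgroup.closure
          {((a' : ℤ), (0 : ℤ), (0 : ℤ)), (μ', (b' : ℤ), (0 : ℤ)), (ν', lam', (c' : ℤ))} →
      a = a' ∧ b = b' ∧ c = c' ∧ μ = μ' ∧ ν = ν' ∧ lam = lam') ∧
    Nat.card {Δ : AddSubgroup (ℤ × ℤ × ℤ) // Δ.index = n} = omegaFn n := by
  refine ⟨fun Δ hΔ => ?_, ?_, card_index_eq_omegaFn hn.ne'⟩
  · obtain ⟨a, b, c, μ, ν, lam, ha, hb, hc, ⟨hμ₀, hμ, hν₀, hν, hl₀, hl⟩, rfl⟩ :=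
      exists_hnfLattice_eq Δ (hΔ ▸ hn.ne')
    have habc : a * b * c = n := (index_hnfLattice (by positivity)).symm.trans hΔ
    exact ⟨a, b, c, μ, ν, lam, ha, hb, hc, habc, hμ₀, hμ, hν₀, hν, hl₀, hl, rfl⟩
  · rintro a b c a' b' c' μ ν lam μ' ν' lam' ⟨-, -, hc, -, hr⟩ ⟨-, -, hc', -, hr'⟩ h
    exact eq_of_hnfLattice_eq hc.ne' hc'.ne' hr hr' h
end
end
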